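/- arXiv:1812.03053 — 2 statements merged into one kernel-verified Lean document; each statement's English description precedes it below -/
import Mathlib

section
/- A tensor function Φ: M → Sym(n) on an isotropic set M is isotropic if and only if there exist scalar-valued functions α₀,…,α_{n−1} depending only on the matrix invariants of X (equivalently, invariant under X ↦ Qᵀ X Q) such that Φ(X) = α₀ I + α₁ X + ⋯ + α_{n−1} X^{n−1} for all X ∈ M. -/
open Matrix

/-- A matrix is orthogonal. -/
def IsOrthogonal {n : ℕ} (Q : Matrix (Fin n) (Fin n) ℝ) : Prop :=
  Q * Qᵀ = 1 ∧ Qᵀ * Q = 1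

/-!
If `Φ` is isotropic and `X ∈ M`, then `Φ X` is fixed by every orthogonal `Q` that fixes `X`.
For an eigenvector `v` of `X`, the reflection `1 - 2 P` in the hyperplane `v⊥` (with `P` the
projection onto `ℝ v`) fixes `X`, so `Φ X` commutes with `P` and `v` is an eigenvector of `Φ X`.
Applied to `u + w` for orthonormal eigenvectors `u, w` with a common eigenvalue, this shows that
`Φ X` acts by one scalar on each eigenspace of `X`, and Lagrange interpolation through the at most
`n` distinct eigenvalues writes `Φ X` as a polynomial of degree `< n` in `X`. Choosing these
coefficients at a fixed representative of each orbit `{Qᵀ X Q}` makes them invariant, and isotropy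
of `Φ` carries the representation along the orbit. The converse holds because `X ↦ Qᵀ X Q` is
multiplicative.
-/

open Polynomial

section IsOrthogonal

variable {n : ℕ} {P Q : Matrix (Fin n) (Fin n) ℝ}

theorem isOrthogonal_one : IsOrthogonal (1 : Matrix (Fin n) (Fin n) ℝ) := by
  simp [IsOrthogonal]

theorem IsOrthogonal.transpose (hQ : IsOrthogonal Q) : IsOrthogonal Qᵀ := by
  simpa [IsOrthogonal] using hQ.symm

theorem IsOrthogonal.mul (hP : IsOrthogonal P) (hQ : IsOrthogonal Q) : IsOrthogonal (P * Q) := by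
  constructor
  · rw [transpose_mul, Matrix.mul_assoc, ← Matrix.mul_assoc Q, hQ.1, Matrix.one_mul, hP.1]
  · rw [transpose_mul, Matrix.mul_assoc, ← Matrix.mul_assoc Pᵀ, hP.2, Matrix.one_mul, hQ.2]

theorem IsOrthogonal.mul_conj_mul_transpose (hQ : IsOrthogonal Q) (X : Matrix (Fin n) (Fin n) ℝ) :
    Q * (Qᵀ * X * Q) * Qᵀ = X := by
  simp only [← Matrix.mul_assoc, hQ.1, Matrix.one_mul]
  rw [Matrix.mul_assoc, hQ.1, Matrix.mul_one]

theorem IsOrthogonal.conj_eq_self_iff (hQ : IsOrthogonal Q) {X : Matrix (Fin n) (Fin n) ℝ} :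
    Qᵀ * X * Q = X ↔ Commute Q X := by
  constructor
  · intro h
    calc Q * X = Q * (Qᵀ * X * Q) := by rw [h]
      _ = X * Q := by rw [← Matrix.mul_assoc, ← Matrix.mul_assoc, hQ.1, Matrix.one_mul]
  · intro h
    rw [Matrix.mul_assoc, ← h.eq, ← Matrix.mul_assoc, hQ.2, Matrix.one_mul]

theorem IsOrthogonal.conj_pow (hQ : IsOrthogonal Q) (X : Matrix (Fin n) (Fin n) ℝ) (k : ℕ) :
    (Qᵀ * X * Q) ^ k = Qᵀ * X ^ k * Q := by
  induction k with
  | zero => simp [hQ.2]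
  | succ k ih =>
    rw [pow_succ, ih, pow_succ]
    simp only [Matrix.mul_assoc]
    rw [← Matrix.mul_assoc Q, hQ.1, Matrix.one_mul]

theorem IsOrthogonal.conj_sum_smul_pow (hQ : IsOrthogonal Q) (X : Matrix (Fin n) (Fin n) ℝ)
    (c : Fin n → ℝ) :
    Qᵀ * (∑ k : Fin n, c k • X ^ (k : ℕ)) * Q = ∑ k : Fin n, c k • (Qᵀ * X * Q) ^ (k : ℕ) := by
  simp only [Matrix.mul_sum, Matrix.sum_mul, Matrix.mul_smul, Matrix.smul_mul, hQ.conj_pow]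

theorem isOrthogonal_one_sub_two_smul (hP : Pᵀ = P) (hPP : P * P = P) :
    IsOrthogonal (1 - (2 : ℝ) • P) := by
  have hsymm : (1 - (2 : ℝ) • P)ᵀ = 1 - (2 : ℝ) • P := by
    rw [transpose_sub, transpose_one, transpose_smul, hP]
  have hinv : (1 - (2 : ℝ) • P) * (1 - (2 : ℝ) • P) = 1 := by
    simp only [Matrix.sub_mul, Matrix.mul_sub, Matrix.one_mul, Matrix.mul_one, Matrix.smul_mul,
      Matrix.mul_smul, hPP]
    module
  exact ⟨by rw [hsymm, hinv], by rw [hsymm, hinv]⟩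

end IsOrthogonal

section LineProjection

variable {ι : Type*} [Fintype ι] {v : ι → ℝ}

noncomputable def lineProjection (v : ι → ℝ) : Matrix ι ι ℝ := (v ⬝ᵥ v)⁻¹ • vecMulVec v v

theorem lineProjection_transpose (v : ι → ℝ) : (lineProjection v)ᵀ = lineProjection v := by
  rw [lineProjection, transpose_smul, transpose_vecMulVec]

theorem lineProjection_mulVec (v w : ι → ℝ) :
    lineProjection v *ᵥ w = ((v ⬝ᵥ w) / (v ⬝ᵥ v)) • v := by
  rw [lineProjection, smul_mulVec, vecMulVec_mulVec, op_smul_eq_smul, smul_smul, div_eq_inv_mul]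

theorem lineProjection_mulVec_self (hv : v ≠ 0) : lineProjection v *ᵥ v = v := by
  rw [lineProjection_mulVec, div_self (dotProduct_self_eq_zero.not.mpr hv), one_smul]

theorem lineProjection_mul_self (hv : v ≠ 0) :
    lineProjection v * lineProjection v = lineProjection v := by
  nth_rw 2 [lineProjection]
  rw [Matrix.mul_smul, mul_vecMulVec, lineProjection_mulVec_self hv, lineProjection]

theorem commute_lineProjection {X : Matrix ι ι ℝ} (hX : X.IsSymm) {μ : ℝ}
    (hXv : X *ᵥ v = μ • v) : Commute (lineProjection v) X := by
  have hvX : v ᵥ* X = μ • v := by rw [← mulVec_transpose, hX.eq, hXv]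
  simp only [Commute, SemiconjBy, lineProjection, Matrix.smul_mul, Matrix.mul_smul, mul_vecMulVec,
    vecMulVec_mul, hXv, hvX, smul_vecMulVec, vecMulVec_smul]

end LineProjection

theorem Polynomial.aeval_eq_sum_fin_smul_pow {R A : Type*} [CommSemiring R] [Semiring A]
    [Algebra R A] {n : ℕ} {p : R[X]} (hp : p.degree < n) (x : A) :
    aeval x p = ∑ k : Fin n, p.coeff k • x ^ (k : ℕ) := by
  rcases eq_or_ne p 0 with rfl | hp0
  · simp
  rw [aeval_eq_sum_range' ((natDegree_lt_iff_degree_lt hp0).mpr hp),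
    Fin.sum_univ_eq_sum_range (fun k => p.coeff k • x ^ k)]

section Spectral

variable {ι : Type*} [Fintype ι] [DecidableEq ι]

theorem Matrix.pow_mulVec_of_mulVec_eq_smul {R : Type*} [CommRing R] {A : Matrix ι ι R}
    {v : ι → R} {μ : R} (h : A *ᵥ v = μ • v) (k : ℕ) : (A ^ k) *ᵥ v = μ ^ k • v := by
  induction k with
  | zero => simp
  | succ k ih => rw [pow_succ', ← mulVec_mulVec, ih, mulVec_smul, h, smul_smul, pow_succ]

theorem Matrix.aeval_mulVec_of_mulVec_eq_smul {R : Type*} [CommRing R] {A : Matrix ι ι R}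
    {v : ι → R} {μ : R} (h : A *ᵥ v = μ • v) (p : R[X]) : aeval A p *ᵥ v = p.eval μ • v := by
  induction p using Polynomial.induction_on' with
  | add p q hp hq => rw [map_add, add_mulVec, hp, hq, eval_add, add_smul]
  | monomial k a =>
    rw [aeval_monomial, eval_monomial, ← Algebra.smul_def, smul_mulVec,
      pow_mulVec_of_mulVec_eq_smul h, smul_smul]

theorem Matrix.ext_of_mulVec_orthonormalBasis {A B : Matrix ι ι ℝ}
    (b : OrthonormalBasis ι ℝ (EuclideanSpace ℝ ι)) (h : ∀ j, A *ᵥ ⇑(b j) = B *ᵥ ⇑(b j)) :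
    A = B :=
  toEuclideanLin.injective <| b.toBasis.ext fun j => by
    rw [OrthonormalBasis.coe_toBasis, toLpLin_apply, toLpLin_apply, h j]

theorem Matrix.IsHermitian.dotProduct_eigenvectorBasis {A : Matrix ι ι ℝ} (hA : A.IsHermitian)
    (i j : ι) :
    ⇑(hA.eigenvectorBasis i) ⬝ᵥ ⇑(hA.eigenvectorBasis j) = if i = j then 1 else 0 := by
  rw [← orthonormal_iff_ite.mp hA.eigenvectorBasis.orthonormal i j,
    EuclideanSpace.inner_eq_star_dotProduct, dotProduct_comm]
  simp

end Spectral

section IsStabilizerInvariant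

variable {n : ℕ} {X Y : Matrix (Fin n) (Fin n) ℝ}

def IsStabilizerInvariant (X Y : Matrix (Fin n) (Fin n) ℝ) : Prop :=
  ∀ Q, IsOrthogonal Q → Qᵀ * X * Q = X → Qᵀ * Y * Q = Y

theorem IsStabilizerInvariant.commute (hXY : IsStabilizerInvariant X Y)
    {P : Matrix (Fin n) (Fin n) ℝ} (hP : Pᵀ = P) (hPP : P * P = P) (hPX : Commute P X) :
    Commute P Y := by
  have hH := isOrthogonal_one_sub_two_smul hP hPP
  have hHX : Commute (1 - (2 : ℝ) • P) X := (Commute.one_left X).sub_left (hPX.smul_left 2)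
  have hHY : Commute (1 - (2 : ℝ) • P) Y :=
    hH.conj_eq_self_iff.mp (hXY _ hH (hH.conj_eq_self_iff.mpr hHX))
  have hPH : P = (2 : ℝ)⁻¹ • (1 - (1 - (2 : ℝ) • P)) := by module
  rw [hPH]
  exact ((Commute.one_left Y).sub_left hHY).smul_left _

theorem IsStabilizerInvariant.exists_mulVec_eq_smul (hXY : IsStabilizerInvariant X Y)
    (hX : X.IsSymm) {v : Fin n → ℝ} (hv : v ≠ 0) {μ : ℝ} (hXv : X *ᵥ v = μ • v) :
    ∃ c : ℝ, Y *ᵥ v = c • v := by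
  have hPY := hXY.commute (lineProjection_transpose v) (lineProjection_mul_self hv)
    (commute_lineProjection hX hXv)
  refine ⟨(v ⬝ᵥ Y *ᵥ v) / (v ⬝ᵥ v), ?_⟩
  calc Y *ᵥ v = Y *ᵥ (lineProjection v *ᵥ v) := by rw [lineProjection_mulVec_self hv]
    _ = lineProjection v *ᵥ (Y *ᵥ v) := by rw [mulVec_mulVec, mulVec_mulVec, hPY.eq]
    _ = _ := lineProjection_mulVec v _

theorem IsStabilizerInvariant.exists_mulVec_eigenvectorBasis (hXY : IsStabilizerInvariant X Y)
    (hX : X.IsHermitian) :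
    ∃ g : ℝ → ℝ, ∀ j, Y *ᵥ ⇑(hX.eigenvectorBasis j) =
      g (hX.eigenvalues j) • ⇑(hX.eigenvectorBasis j) := by
  set b := hX.eigenvectorBasis
  set μ := hX.eigenvalues
  have hb : ∀ i j, ⇑(b i) ⬝ᵥ ⇑(b j) = if i = j then 1 else 0 := hX.dotProduct_eigenvectorBasis
  have hXb : ∀ j, X *ᵥ ⇑(b j) = μ j • ⇑(b j) := hX.mulVec_eigenvectorBasis
  have hXsymm : X.IsSymm := isHermitian_iff_isSymm.mp hX
  have hb_ne : ∀ j, ⇑(b j) ≠ 0 := fun j h => by simpa [h] using hb j j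
  choose c hc using fun j => hXY.exists_mulVec_eq_smul hXsymm (hb_ne j) (hXb j)
  -- If `μ i = μ j`, then `b i + b j` is an eigenvector of `X`, hence of `Y`.
  have hc_eq : ∀ i j, μ i = μ j → c i = c j := by
    intro i j hμ
    rcases eq_or_ne i j with rfl | hij
    · rfl
    have hXv : X *ᵥ (⇑(b i) + ⇑(b j)) = μ i • (⇑(b i) + ⇑(b j)) := by
      rw [mulVec_add, hXb, hXb, hμ, smul_add]
    have hv : ⇑(b i) + ⇑(b j) ≠ 0 := fun h => by
      simpa [dotProduct_add, hb, hij] using congrArg (⇑(b i) ⬝ᵥ ·) h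
    obtain ⟨d, hd⟩ := hXY.exists_mulVec_eq_smul hXsymm hv hXv
    rw [mulVec_add, hc, hc, smul_add] at hd
    have hi := congrArg (⇑(b i) ⬝ᵥ ·) hd
    have hj := congrArg (⇑(b j) ⬝ᵥ ·) hd
    simp only [dotProduct_add, dotProduct_smul, hb, if_neg hij, if_neg hij.symm, if_pos,
      smul_eq_mul] at hi hj
    linarith
  refine ⟨fun t => if h : ∃ j, μ j = t then c h.choose else 0, fun j => ?_⟩
  have h : ∃ i, μ i = μ j := ⟨j, rfl⟩
  simp only [dif_pos h, hc_eq _ _ h.choose_spec, hc]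

theorem IsStabilizerInvariant.exists_eq_aeval (hXY : IsStabilizerInvariant X Y) (hX : X.IsSymm) :
    ∃ p : ℝ[X], p.degree < n ∧ Y = aeval X p := by
  have hXh : X.IsHermitian := isHermitian_iff_isSymm.mpr hX
  obtain ⟨g, hg⟩ := hXY.exists_mulVec_eigenvectorBasis hXh
  refine ⟨Lagrange.interpolate (Finset.univ.image hXh.eigenvalues) id g, ?_, ?_⟩
  · refine (Lagrange.degree_interpolate_lt _ (Set.injOn_id _)).trans_le ?_
    exact_mod_cast Finset.card_image_le.trans (Finset.card_fin n).le
  · refine ext_of_mulVec_orthonormalBasis hXh.eigenvectorBasis fun j => ?_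
    rw [hg, aeval_mulVec_of_mulVec_eq_smul (hXh.mulVec_eigenvectorBasis j)]
    congr 1
    exact (Lagrange.eval_interpolate_at_node g (Set.injOn_id _)
      (Finset.mem_image_of_mem _ (Finset.mem_univ j))).symm

theorem IsStabilizerInvariant.exists_eq_sum_smul_pow (hXY : IsStabilizerInvariant X Y)
    (hX : X.IsSymm) :
    ∃ c : Fin n → ℝ, Y = ∑ k : Fin n, c k • X ^ (k : ℕ) := by
  obtain ⟨p, hp, rfl⟩ := hXY.exists_eq_aeval hX
  exact ⟨fun k => p.coeff k, aeval_eq_sum_fin_smul_pow hp X⟩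

end IsStabilizerInvariant

section OrbitRepresentative

variable {n : ℕ}

def orthogonalConjSetoid (n : ℕ) : Setoid (Matrix (Fin n) (Fin n) ℝ) where
  r X Y := ∃ Q, IsOrthogonal Q ∧ Y = Qᵀ * X * Q
  iseqv :=
    { refl _ := ⟨1, isOrthogonal_one, by simp⟩
      symm := by
        rintro X _ ⟨Q, hQ, rfl⟩
        exact ⟨Qᵀ, hQ.transpose, by rw [transpose_transpose, hQ.mul_conj_mul_transpose]⟩
      trans := by
        rintro X _ _ ⟨Q, hQ, rfl⟩ ⟨P, hP, rfl⟩
        exact ⟨Q * P, hQ.mul hP, by simp only [transpose_mul, Matrix.mul_assoc]⟩ }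

noncomputable def orbitRep (X : Matrix (Fin n) (Fin n) ℝ) : Matrix (Fin n) (Fin n) ℝ :=
  (Quotient.mk (orthogonalConjSetoid n) X).out

theorem orbitRep_conj {Q : Matrix (Fin n) (Fin n) ℝ} (hQ : IsOrthogonal Q)
    (X : Matrix (Fin n) (Fin n) ℝ) : orbitRep (Qᵀ * X * Q) = orbitRep X := by
  have h : (orthogonalConjSetoid n).r X (Qᵀ * X * Q) := ⟨Q, hQ, rfl⟩
  rw [orbitRep, orbitRep, Quotient.sound ((orthogonalConjSetoid n).symm h)]

theorem exists_eq_conj_orbitRep (X : Matrix (Fin n) (Fin n) ℝ) :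
    ∃ Q, IsOrthogonal Q ∧ X = Qᵀ * orbitRep X * Q :=
  Quotient.exact (Quotient.out_eq (Quotient.mk (orthogonalConjSetoid n) X))

theorem orbitRep_mem {M : Set (Matrix (Fin n) (Fin n) ℝ)}
    (hM : ∀ X ∈ M, ∀ Q, IsOrthogonal Q → Qᵀ * X * Q ∈ M) {X : Matrix (Fin n) (Fin n) ℝ}
    (hX : X ∈ M) : orbitRep X ∈ M := by
  obtain ⟨Q, hQ, hXQ⟩ := exists_eq_conj_orbitRep X
  have := hM X hX Qᵀ hQ.transpose
  rwa [transpose_transpose, hXQ, hQ.mul_conj_mul_transpose] at this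

end OrbitRepresentative

theorem isotropic_iff_invariant_polynomial_representation_general {n : ℕ}
    (M : Set (Matrix (Fin n) (Fin n) ℝ))
    (hMsym : ∀ X ∈ M, X.IsSymm)
    (hMiso : ∀ X ∈ M, ∀ Q : Matrix (Fin n) (Fin n) ℝ, IsOrthogonal Q →
      Qᵀ * X * Q ∈ M)
    (Φ : Matrix (Fin n) (Fin n) ℝ → Matrix (Fin n) (Fin n) ℝ) :
    (∀ X ∈ M, ∀ Q : Matrix (Fin n) (Fin n) ℝ, IsOrthogonal Q →
        Φ (Qᵀ * X * Q) = Qᵀ * Φ X * Q) ↔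
    (∃ α : Fin n → (Matrix (Fin n) (Fin n) ℝ → ℝ),
      (∀ k : Fin n, ∀ X ∈ M, ∀ Q : Matrix (Fin n) (Fin n) ℝ, IsOrthogonal Q →
        α k (Qᵀ * X * Q) = α k X) ∧
      ∀ X ∈ M, Φ X = ∑ k : Fin n, α k X • X ^ (k : ℕ)) := by
  constructor
  · intro hΦ
    let coeffs (X : Matrix (Fin n) (Fin n) ℝ) : Fin n → ℝ :=
      Classical.epsilon fun c => Φ X = ∑ k : Fin n, c k • X ^ (k : ℕ)
    refine ⟨fun k X => coeffs (orbitRep X) k,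
      fun k X _ Q hQ => congrArg (coeffs · k) (orbitRep_conj hQ X), fun X hX => ?_⟩
    obtain ⟨Q, hQ, hXQ⟩ := exists_eq_conj_orbitRep X
    have hR := orbitRep_mem hMiso hX
    have hstab : IsStabilizerInvariant (orbitRep X) (Φ (orbitRep X)) := fun P hP hPR => by
      rw [← hΦ _ hR P hP, hPR]
    have hΦR : Φ (orbitRep X) = ∑ k : Fin n, coeffs (orbitRep X) k • orbitRep X ^ (k : ℕ) :=
      Classical.epsilon_spec (hstab.exists_eq_sum_smul_pow (hMsym _ hR))
    calc Φ X = Qᵀ * Φ (orbitRep X) * Q := by rw [← hΦ _ hR Q hQ, ← hXQ]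
      _ = _ := by rw [hΦR, hQ.conj_sum_smul_pow, ← hXQ]
  · rintro ⟨α, hα, hΦ⟩ X hX Q hQ
    rw [hΦ _ (hMiso X hX Q hQ), hΦ X hX, hQ.conj_sum_smul_pow]
    simp only [hα _ X hX Q hQ]

/-- A tensor function Φ : M → Sym(n) on an isotropic set
M ⊂ Sym(n) is isotropic iff there are scalar-valued functions α₀,…,α_{n−1},
depending only on the matrix invariants of X (i.e. invariant under
X ↦ Qᵀ X Q), with Φ(X) = ∑_{k=0}^{n-1} αₖ(X) Xᵏ for all X ∈ M. -/
theorem isotropic_iff_invariant_polynomial_representation {n : ℕ}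
    (M : Set (Matrix (Fin n) (Fin n) ℝ))
    (hMsym : ∀ X ∈ M, X.IsSymm)
    (hMiso : ∀ X ∈ M, ∀ Q : Matrix (Fin n) (Fin n) ℝ, IsOrthogonal Q →
      Qᵀ * X * Q ∈ M)
    (Φ : Matrix (Fin n) (Fin n) ℝ → Matrix (Fin n) (Fin n) ℝ)
    (hΦsym : ∀ X ∈ M, (Φ X).IsSymm) :
    (∀ X ∈ M, ∀ Q : Matrix (Fin n) (Fin n) ℝ, IsOrthogonal Q →
        Φ (Qᵀ * X * Q) = Qᵀ * Φ X * Q) ↔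
    (∃ α : Fin n → (Matrix (Fin n) (Fin n) ℝ → ℝ),
      (∀ k : Fin n, ∀ X ∈ M, ∀ Q : Matrix (Fin n) (Fin n) ℝ, IsOrthogonal Q →
        α k (Qᵀ * X * Q) = α k X) ∧
      ∀ X ∈ M, Φ X = ∑ k : Fin n, α k X • X ^ (k : ℕ)) :=
  isotropic_iff_invariant_polynomial_representation_general M hMsym hMiso Φ
end

section
/- An isotropic function σ̂: PSym(3) → Sym(3) is semi-invertible (B = ψ₀ I + ψ₁ σ̂(B) + ψ₂ σ̂(B)² with invariant-valued coefficients) if and only if it is bi-coaxial (for every B, each eigenvector of B is an eigenvector of σ̂(B) and vice versa). -/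
open Matrix

def IsEigenvector {n : ℕ} (A : Matrix (Fin n) (Fin n) ℝ) (v : Fin n → ℝ) : Prop :=
  v ≠ 0 ∧ ∃ μ : ℝ, A.mulVec v = μ • v

/-- `A` is coaxial to `B`: every eigenvector of `A` is an eigenvector of `B`. -/
def Coaxial {n : ℕ} (A B : Matrix (Fin n) (Fin n) ℝ) : Prop :=
  ∀ v : Fin n → ℝ, IsEigenvector A v → IsEigenvector B v

/-- PSym(3): positive-definite symmetric real 3×3 matrices. -/
def PSym3 : Set (Matrix (Fin 3) (Fin 3) ℝ) := {B | B.IsSymm ∧ B.PosDef}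

/-- σ̂ is semi-invertible: B = ψ₀ I + ψ₁ σ̂(B) + ψ₂ σ̂(B)² with coefficients ψᵢ
depending only on the matrix invariants of B. -/
def SemiInvertible (σ : Matrix (Fin 3) (Fin 3) ℝ → Matrix (Fin 3) (Fin 3) ℝ) : Prop :=
  ∃ ψ : Fin 3 → (Matrix (Fin 3) (Fin 3) ℝ → ℝ),
    (∀ k : Fin 3, ∀ B ∈ PSym3, ∀ Q : Matrix (Fin 3) (Fin 3) ℝ, IsOrthogonal Q →
      ψ k (Qᵀ * B * Q) = ψ k B) ∧
    ∀ B ∈ PSym3, B = ψ 0 B • 1 + ψ 1 B • σ B + ψ 2 B • (σ B) ^ 2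

/-!
If `B = ψ₀ I + ψ₁ σ̂(B) + ψ₂ σ̂(B)²`, every eigenvector of `σ̂(B)` is one of `B`. For an
eigenvector `v` of `B`, the Householder reflection `I - 2 v vᵀ / |v|²` is orthogonal and commutes
with `B`, so by isotropy it commutes with `σ̂(B)`, which forces `v` to be an eigenvector of `σ̂(B)`.

Conversely, if every eigenvector of the symmetric matrix `σ̂(B)` is one of `B`, then `B` acts by a
scalar on each eigenspace of `σ̂(B)`, so `B = p(σ̂(B))` for a Lagrange interpolation polynomial `p`
of degree `< 3`. The coefficients `ψᵢ(B)` are chosen among all admissible ones; by isotropy the set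
of admissible coefficients of `Qᵀ B Q` equals that of `B`, so the choice is orthogonally invariant.
-/

open Polynomial

namespace Polynomial

theorem exists_degree_lt_card_eval_eq {ι K : Type*} [Fintype ι] [Field K] {t v : ι → K}
    (h : v.FactorsThrough t) :
    ∃ p : K[X], p.degree < Fintype.card ι ∧ ∀ i, p.eval (t i) = v i := by
  classical
  refine ⟨Lagrange.interpolate (Finset.univ.image t) id (Function.extend t v 0), ?_, fun i => ?_⟩
  · calc _ < ((Finset.univ.image t).card : WithBot ℕ) :=
          Lagrange.degree_interpolate_lt _ (Set.injOn_id _)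
      _ ≤ Fintype.card ι := by exact_mod_cast Finset.card_image_le
  · rw [← id_eq (t i), Lagrange.eval_interpolate_at_node _ (Set.injOn_id _)
      (Finset.mem_image_of_mem t (Finset.mem_univ i)), h.extend_apply]

theorem aeval_eq_of_degree_lt_three {R A : Type*} [CommSemiring R] [Semiring A] [Algebra R A]
    {p : R[X]} (hp : p.degree < 3) (x : A) :
    aeval x p = p.coeff 0 • 1 + p.coeff 1 • x + p.coeff 2 • x ^ 2 := by
  have hp' : p.natDegree < 3 := by
    rcases eq_or_ne p 0 with rfl | hp0
    · simp
    · exact (natDegree_lt_iff_degree_lt hp0).2 hp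
  simp [aeval_eq_sum_range' hp', Finset.sum_range_succ]

end Polynomial

namespace Matrix

variable {n R : Type*} [Fintype n] [CommRing R]

theorem aeval_mulVec_of_mulVec_eq_smul_s15 [DecidableEq n] {A : Matrix n n R} {v : n → R} {μ : R}
    (h : A *ᵥ v = μ • v) (p : R[X]) : aeval A p *ᵥ v = p.eval μ • v := by
  have h' : toLinAlgEquiv' A v = μ • v := by simpa using h
  simpa [aeval_algEquiv] using Module.End.aeval_apply_of_mem_apply_eq_smul (p := p) h'

theorem commute_vecMulVec_self_of_mulVec_eq_smul {A : Matrix n n R} (hA : A.IsSymm)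
    {v : n → R} {μ : R} (h : A *ᵥ v = μ • v) : Commute A (vecMulVec v v) := by
  rw [Commute, SemiconjBy, mul_vecMulVec, vecMulVec_mul, ← mulVec_transpose, hA.eq, h,
    smul_vecMulVec, vecMulVec_smul]

theorem exists_mulVec_eq_smul_of_commute_vecMulVec {K : Type*} [Field K] {A : Matrix n n K}
    {v : n → K} (hv : v ⬝ᵥ v ≠ 0) (h : Commute A (vecMulVec v v)) : ∃ μ : K, A *ᵥ v = μ • v := by
  refine ⟨(v ⬝ᵥ v)⁻¹ * (v ⬝ᵥ A *ᵥ v), ?_⟩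
  have key : (v ⬝ᵥ v) • A *ᵥ v = (v ⬝ᵥ A *ᵥ v) • v := by
    simpa [← mulVec_mulVec, vecMulVec_mulVec, mulVec_smul] using congr($h.eq *ᵥ v)
  rw [mul_smul, ← key, smul_smul, inv_mul_cancel₀ hv, one_smul]

end Matrix

namespace IsOrthogonal

variable {n : ℕ} {Q : Matrix (Fin n) (Fin n) ℝ}

theorem transpose_mul_mul_eq_self_iff (hQ : IsOrthogonal Q) {A : Matrix (Fin n) (Fin n) ℝ} :
    Qᵀ * A * Q = A ↔ Commute A Q := by
  constructor
  · intro h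
    calc A * Q = Q * (Qᵀ * A * Q) := by rw [← mul_assoc, ← mul_assoc, hQ.1, one_mul]
      _ = Q * A := by rw [h]
  · intro h
    rw [mul_assoc, h.eq, ← mul_assoc, hQ.2, one_mul]

theorem transpose_mul_mul_inj (hQ : IsOrthogonal Q) {A B : Matrix (Fin n) (Fin n) ℝ} :
    Qᵀ * A * Q = Qᵀ * B * Q ↔ A = B := by
  refine ⟨fun h => ?_, fun h => h ▸ rfl⟩
  simpa [← mul_assoc, hQ.1, mul_assoc _ Q Qᵀ] using congr(Q * $h * Qᵀ)

theorem transpose_mul_mul_quadratic (hQ : IsOrthogonal Q) (a b c : ℝ)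
    (A : Matrix (Fin n) (Fin n) ℝ) :
    Qᵀ * (a • 1 + b • A + c • A ^ 2) * Q = a • 1 + b • (Qᵀ * A * Q) + c • (Qᵀ * A * Q) ^ 2 := by
  have hQQ : ∀ X : Matrix (Fin n) (Fin n) ℝ, Q * (Qᵀ * X) = X := fun X => by
    rw [← mul_assoc, hQ.1, one_mul]
  simp [pow_two, mul_add, add_mul, mul_assoc, hQ.2, hQQ]

end IsOrthogonal

section Householder

variable {n : ℕ}

noncomputable def householder (v : Fin n → ℝ) : Matrix (Fin n) (Fin n) ℝ :=
  1 - (2 / (v ⬝ᵥ v)) • vecMulVec v v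

theorem isOrthogonal_householder {v : Fin n → ℝ} (hv : v ≠ 0) : IsOrthogonal (householder v) := by
  have hvv : v ⬝ᵥ v ≠ 0 := dotProduct_self_eq_zero.not.2 hv
  have hsymm : (householder v)ᵀ = householder v := by
    simp [householder, transpose_vecMulVec]
  have hsq : householder v * householder v = 1 := by
    simp only [householder, sub_mul, mul_sub, one_mul, mul_one, smul_mul_smul,
      vecMulVec_mul_vecMulVec, vecMulVec_smul]
    have hcoeff : 2 / (v ⬝ᵥ v) * (2 / (v ⬝ᵥ v)) * (v ⬝ᵥ v) = 2 / (v ⬝ᵥ v) + 2 / (v ⬝ᵥ v) := by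
      field_simp; ring
    rw [smul_smul, hcoeff, add_smul]
    abel
  exact ⟨by rw [hsymm, hsq], by rw [hsymm, hsq]⟩

theorem commute_householder_iff {A : Matrix (Fin n) (Fin n) ℝ} {v : Fin n → ℝ} (hv : v ≠ 0) :
    Commute A (householder v) ↔ Commute A (vecMulVec v v) := by
  have hc : 2 / (v ⬝ᵥ v) ≠ 0 := div_ne_zero two_ne_zero (dotProduct_self_eq_zero.not.2 hv)
  refine ⟨fun h => ?_, fun h => (Commute.one_right A).sub_right (h.smul_right _)⟩
  simpa only [householder, sub_sub_cancel, smul_smul, inv_mul_cancel₀ hc, one_smul] using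
    ((Commute.one_right A).sub_right h).smul_right (2 / (v ⬝ᵥ v))⁻¹

end Householder

section Coaxial

variable {n : ℕ}

theorem coaxial_of_forall_commute_isOrthogonal {B M : Matrix (Fin n) (Fin n) ℝ} (hB : B.IsSymm)
    (hM : ∀ Q, IsOrthogonal Q → Commute B Q → Commute M Q) : Coaxial B M := by
  rintro v ⟨hv, μ, hBv⟩
  have hBH : Commute B (householder v) :=
    (commute_householder_iff hv).2 (commute_vecMulVec_self_of_mulVec_eq_smul hB hBv)
  exact ⟨hv, exists_mulVec_eq_smul_of_commute_vecMulVec (dotProduct_self_eq_zero.not.2 hv)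
    ((commute_householder_iff hv).1 (hM _ (isOrthogonal_householder hv) hBH))⟩

theorem coaxial_quadratic (S : Matrix (Fin n) (Fin n) ℝ) (a b c : ℝ) :
    Coaxial S (a • 1 + b • S + c • S ^ 2) := by
  rintro v ⟨hv, μ, hSv⟩
  have hq : aeval S (C a + C b * X + C c * X ^ 2) = a • 1 + b • S + c • S ^ 2 := by
    simp [Algebra.algebraMap_eq_smul_one]
  exact ⟨hv, _, hq ▸ aeval_mulVec_of_mulVec_eq_smul_s15 hSv _⟩

theorem Coaxial.eigenvalue_eq_of_linearIndependent {S B : Matrix (Fin n) (Fin n) ℝ}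
    (h : Coaxial S B) {x y : Fin n → ℝ} (hxy : LinearIndependent ℝ ![x, y]) {μ a b : ℝ}
    (hx : S *ᵥ x = μ • x) (hy : S *ᵥ y = μ • y) (hBx : B *ᵥ x = a • x)
    (hBy : B *ᵥ y = b • y) : a = b := by
  have hxy0 : x + y ≠ 0 := fun h0 =>
    one_ne_zero (LinearIndependent.pair_iff.1 hxy 1 1 (by simpa using h0)).1
  obtain ⟨c, hc⟩ := (h (x + y) ⟨hxy0, μ, by rw [mulVec_add, hx, hy, smul_add]⟩).2
  rw [mulVec_add, hBx, hBy] at hc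
  obtain ⟨hac, hbc⟩ := LinearIndependent.pair_iff.1 hxy (a - c) (b - c)
    (by linear_combination (norm := module) hc)
  linarith

theorem Coaxial.exists_eq_aeval {S B : Matrix (Fin n) (Fin n) ℝ} (hS : S.IsSymm)
    (h : Coaxial S B) : ∃ p : ℝ[X], p.degree < n ∧ B = aeval S p := by
  have hH : S.IsHermitian := by
    rwa [Matrix.IsHermitian, conjTranspose_eq_transpose_of_trivial]
  let e := hH.eigenvectorBasis.toBasis.map (WithLp.linearEquiv 2 ℝ (Fin n → ℝ))
  have hSe : ∀ i, S *ᵥ e i = hH.eigenvalues i • e i := by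
    simpa [e] using hH.mulVec_eigenvectorBasis
  choose lam hlam using fun i => (h (e i) ⟨e.ne_zero i, _, hSe i⟩).2
  have hfac : lam.FactorsThrough hH.eigenvalues := by
    intro i j hij
    rcases eq_or_ne i j with rfl | hne
    · rfl
    exact h.eigenvalue_eq_of_linearIndependent (LinearIndependent.pair_iff.2
      ((LinearIndepOn.pair_iff _ hne).1 (e.linearIndependent.linearIndepOn _)))
      (hSe i) (hij ▸ hSe j) (hlam i) (hlam j)
  obtain ⟨p, hp, hpe⟩ := exists_degree_lt_card_eval_eq hfac
  refine ⟨p, by simpa using hp, toLin'.injective (e.ext fun i => ?_)⟩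
  simp [hlam, aeval_mulVec_of_mulVec_eq_smul_s15 (hSe i), hpe]

end Coaxial

theorem semiInvertible_of_forall_exists_quadratic
    {σ : Matrix (Fin 3) (Fin 3) ℝ → Matrix (Fin 3) (Fin 3) ℝ}
    (hσiso : ∀ B ∈ PSym3, ∀ Q : Matrix (Fin 3) (Fin 3) ℝ, IsOrthogonal Q →
      σ (Qᵀ * B * Q) = Qᵀ * σ B * Q)
    (h : ∀ B ∈ PSym3, ∃ c : Fin 3 → ℝ, B = c 0 • 1 + c 1 • σ B + c 2 • σ B ^ 2) :
    SemiInvertible σ := by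
  let IsCoeff (B : Matrix (Fin 3) (Fin 3) ℝ) (c : Fin 3 → ℝ) : Prop :=
    B = c 0 • 1 + c 1 • σ B + c 2 • σ B ^ 2
  refine ⟨fun k B => Classical.epsilon (IsCoeff B) k, fun k B hB Q hQ => ?_,
    fun B hB => Classical.epsilon_spec (h B hB)⟩
  have hconj : IsCoeff (Qᵀ * B * Q) = IsCoeff B := by
    funext c
    simp only [IsCoeff, hσiso B hB Q hQ, ← hQ.transpose_mul_mul_quadratic, hQ.transpose_mul_mul_inj]
  simp only [hconj]

/-- An isotropic function σ̂ : PSym(3) → Sym(3) is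
semi-invertible iff it is bi-coaxial. -/
theorem semiInvertible_iff_bicoaxial
    (σ : Matrix (Fin 3) (Fin 3) ℝ → Matrix (Fin 3) (Fin 3) ℝ)
    (hσsym : ∀ B ∈ PSym3, (σ B).IsSymm)
    (hσiso : ∀ B ∈ PSym3, ∀ Q : Matrix (Fin 3) (Fin 3) ℝ, IsOrthogonal Q →
      σ (Qᵀ * B * Q) = Qᵀ * σ B * Q) :
    SemiInvertible σ ↔ ∀ B ∈ PSym3, Coaxial B (σ B) ∧ Coaxial (σ B) B := by
  constructor
  · rintro ⟨ψ, -, hψ⟩ B hB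
    refine ⟨coaxial_of_forall_commute_isOrthogonal hB.1 fun Q hQ hBQ => ?_, ?_⟩
    · rw [← hQ.transpose_mul_mul_eq_self_iff, ← hσiso B hB Q hQ,
        hQ.transpose_mul_mul_eq_self_iff.2 hBQ]
    · simpa only [← hψ B hB] using coaxial_quadratic (σ B) (ψ 0 B) (ψ 1 B) (ψ 2 B)
  · intro hco
    refine semiInvertible_of_forall_exists_quadratic hσiso fun B hB => ?_
    obtain ⟨p, hp, hBp⟩ := (hco B hB).2.exists_eq_aeval (hσsym B hB)
    exact ⟨![p.coeff 0, p.coeff 1, p.coeff 2], by simpa [aeval_eq_of_degree_lt_three hp] using hBp⟩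
end
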